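/- arXiv:2202.06400 — 4 statements merged into one kernel-verified Lean document; each statement's English description precedes it below -/
import Mathlib

section
/- Let W be an n × n real symmetric matrix with W − I_n positive semidefinite, let z ∈ ℝⁿ, let c > 0, and set V = W + c z zᵀ. Then for every u ∈ ℝⁿ, (zᵀ V⁻² u)² ≤ 2 ((zᵀ W⁻² u)² + (zᵀ W⁻¹ u)²). -/
/-!
By Sherman–Morrison, `zᵀV⁻²u = s · zᵀW⁻²u − t · zᵀW⁻¹u` with `s = (1 + cρ)⁻¹` and
`t = cφ(1 + cρ)⁻²`, where `ρ = zᵀW⁻¹z` and `φ = zᵀW⁻²z`. Since `W⁻¹ − W⁻² = W⁻¹(W − I)W⁻¹` is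
positive semidefinite, `0 ≤ φ ≤ ρ`, so `s` and `t` lie in `[0, 1]`, and
`(sa − tb)² ≤ 2(a² + b²)` for all such `s`, `t`.
-/

open Matrix

section ShermanMorrison

variable {n K : Type*} [Fintype n] [DecidableEq n] [Field K]

theorem inv_add_smul_vecMulVec {A : Matrix n n K} (hA : IsUnit A.det) (c : K) (x y : n → K)
    (h : 1 + c * (y ⬝ᵥ A⁻¹ *ᵥ x) ≠ 0) :
    (A + c • vecMulVec x y)⁻¹ =
      A⁻¹ - (c / (1 + c * (y ⬝ᵥ A⁻¹ *ᵥ x))) • vecMulVec (A⁻¹ *ᵥ x) (y ᵥ* A⁻¹) := by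
  refine inv_eq_right_inv ?_
  have hAY : A * vecMulVec (A⁻¹ *ᵥ x) (y ᵥ* A⁻¹) = vecMulVec x (y ᵥ* A⁻¹) := by
    rw [mul_vecMulVec, mulVec_mulVec, mul_nonsing_inv A hA, one_mulVec]
  have hXY : vecMulVec x y * vecMulVec (A⁻¹ *ᵥ x) (y ᵥ* A⁻¹) =
      (y ⬝ᵥ A⁻¹ *ᵥ x) • vecMulVec x (y ᵥ* A⁻¹) := by
    rw [vecMulVec_mul_vecMulVec, vecMulVec_smul]
  rw [add_mul, mul_sub, mul_sub, mul_nonsing_inv A hA, Matrix.mul_smul, hAY, Matrix.smul_mul,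
    vecMulVec_mul, Matrix.smul_mul, Matrix.mul_smul, hXY]
  match_scalars <;> field_simp
  ring

theorem vecMul_inv_add_smul_vecMulVec {A : Matrix n n K} (hA : IsUnit A.det) (c : K)
    (x y : n → K) (h : 1 + c * (y ⬝ᵥ A⁻¹ *ᵥ x) ≠ 0) :
    y ᵥ* (A + c • vecMulVec x y)⁻¹ = (1 + c * (y ⬝ᵥ A⁻¹ *ᵥ x))⁻¹ • (y ᵥ* A⁻¹) := by
  rw [inv_add_smul_vecMulVec hA c x y h, vecMul_sub, vecMul_smul, vecMul_vecMulVec,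
    smul_smul]
  match_scalars
  field_simp
  ring

theorem dotProduct_sq_inv_add_smul_vecMulVec_mulVec {A : Matrix n n K} (hA : IsUnit A.det)
    (c : K) (x y w : n → K) (h : 1 + c * (y ⬝ᵥ A⁻¹ *ᵥ x) ≠ 0) :
    y ⬝ᵥ ((A + c • vecMulVec x y)⁻¹ * (A + c • vecMulVec x y)⁻¹) *ᵥ w =
      (1 + c * (y ⬝ᵥ A⁻¹ *ᵥ x))⁻¹ * (y ⬝ᵥ (A⁻¹ * A⁻¹) *ᵥ w) -
        c * (y ⬝ᵥ (A⁻¹ * A⁻¹) *ᵥ x) * (1 + c * (y ⬝ᵥ A⁻¹ *ᵥ x))⁻¹ ^ 2 * (y ⬝ᵥ A⁻¹ *ᵥ w) := by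
  rw [← mulVec_mulVec, dotProduct_mulVec, vecMul_inv_add_smul_vecMulVec hA c x y h,
    smul_dotProduct, inv_add_smul_vecMulVec hA c x y h, sub_mulVec, smul_mulVec,
    vecMulVec_mulVec, dotProduct_sub, dotProduct_smul]
  simp only [← dotProduct_mulVec, mulVec_mulVec, dotProduct_smul, smul_eq_mul,
    op_smul_eq_smul]
  ring

end ShermanMorrison

open scoped ComplexOrder in
theorem posDef_of_posSemidef_sub_one {n 𝕜 : Type*} [DecidableEq n] [RCLike 𝕜]
    {W : Matrix n n 𝕜} (h : (W - 1).PosSemidef) : W.PosDef :=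
  sub_add_cancel W 1 ▸ PosDef.posSemidef_add h PosDef.one

section QuadraticForms

variable {n : Type*} [Fintype n] [DecidableEq n] {W : Matrix n n ℝ}

theorem dotProduct_inv_mul_inv_mulVec_self_nonneg (hW : W.IsSymm) (z : n → ℝ) :
    0 ≤ z ⬝ᵥ (W⁻¹ * W⁻¹) *ᵥ z := by
  have hsymm : W⁻¹ᵀ = W⁻¹ := by rw [transpose_nonsing_inv, hW.eq]
  rw [← mulVec_mulVec, dotProduct_mulVec, ← mulVec_transpose, hsymm]
  exact dotProduct_self_star_nonneg (W⁻¹ *ᵥ z)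

theorem dotProduct_inv_mul_inv_mulVec_self_le (h : (W - 1).PosSemidef) (z : n → ℝ) :
    z ⬝ᵥ (W⁻¹ * W⁻¹) *ᵥ z ≤ z ⬝ᵥ W⁻¹ *ᵥ z := by
  have hW := posDef_of_posSemidef_sub_one h
  have hconj : W⁻¹ᴴ * (W - 1) * W⁻¹ = W⁻¹ - W⁻¹ * W⁻¹ := by
    rw [hW.inv.isHermitian.eq, mul_sub, mul_one, sub_mul,
      nonsing_inv_mul W hW.det_pos.ne'.isUnit, one_mul]
  have hnonneg := (hconj ▸ h.conjTranspose_mul_mul_same W⁻¹).dotProduct_mulVec_nonneg z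
  rwa [star_trivial, sub_mulVec, dotProduct_sub, sub_nonneg] at hnonneg

end QuadraticForms

theorem sq_mul_sub_mul_le_two_mul_add_sq {s t a b : ℝ} (hs : |s| ≤ 1) (ht : |t| ≤ 1) :
    (s * a - t * b) ^ 2 ≤ 2 * (a ^ 2 + b ^ 2) := by
  have hs2 : s ^ 2 ≤ 1 := sq_le_one_iff_abs_le_one s |>.mpr hs
  have ht2 : t ^ 2 ≤ 1 := sq_le_one_iff_abs_le_one t |>.mpr ht
  calc (s * a - t * b) ^ 2 ≤ 2 * ((s * a) ^ 2 + (t * b) ^ 2) := by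
        nlinarith [sq_nonneg (s * a + t * b)]
    _ = 2 * (s ^ 2 * a ^ 2 + t ^ 2 * b ^ 2) := by ring
    _ ≤ 2 * (a ^ 2 + b ^ 2) := by
        gcongr
        · exact mul_le_of_le_one_left (sq_nonneg a) hs2
        · exact mul_le_of_le_one_left (sq_nonneg b) ht2

/-- For `W` real symmetric with `W − Iₙ` positive semidefinite, `c > 0` and
`V = W + c z zᵀ`, the cross terms of the squared inverse satisfy
`(zᵀ V⁻² u)² ≤ 2 ((zᵀ W⁻² u)² + (zᵀ W⁻¹ u)²)` for every `u`. -/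
theorem leave_one_out_sq_cross_term_bound
    {n : ℕ} (W : Matrix (Fin n) (Fin n) ℝ) (hW : W.IsSymm)
    (hpsd : (W - 1).PosSemidef)
    (z : Fin n → ℝ) (c : ℝ) (hc : 0 < c) :
    ∀ u : Fin n → ℝ,
      (z ⬝ᵥ (((W + c • vecMulVec z z)⁻¹ * (W + c • vecMulVec z z)⁻¹) *ᵥ u)) ^ 2 ≤
        2 * ((z ⬝ᵥ ((W⁻¹ * W⁻¹) *ᵥ u)) ^ 2 + (z ⬝ᵥ (W⁻¹ *ᵥ u)) ^ 2) := by
  intro u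
  have hWpd := posDef_of_posSemidef_sub_one hpsd
  have hρ : 0 ≤ z ⬝ᵥ W⁻¹ *ᵥ z := by
    simpa using hWpd.inv.posSemidef.dotProduct_mulVec_nonneg z
  have hφ := dotProduct_inv_mul_inv_mulVec_self_nonneg hW z
  have hφρ := dotProduct_inv_mul_inv_mulVec_self_le hpsd z
  have hD : 0 < 1 + c * (z ⬝ᵥ W⁻¹ *ᵥ z) := by positivity
  rw [dotProduct_sq_inv_add_smul_vecMulVec_mulVec hWpd.det_pos.ne'.isUnit c z z u hD.ne']
  refine sq_mul_sub_mul_le_two_mul_add_sq ?_ ?_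
  · rw [abs_of_pos (inv_pos.mpr hD)]
    exact inv_le_one_of_one_le₀ (by linarith [mul_nonneg hc.le hρ])
  · rw [abs_of_nonneg (by positivity), inv_pow, ← div_eq_mul_inv, div_le_one (by positivity)]
    nlinarith [mul_le_mul_of_nonneg_left hφρ hc.le, sq_nonneg (c * (z ⬝ᵥ W⁻¹ *ᵥ z))]
end

section
/- Let W be an n × n real symmetric positive definite matrix, let z ∈ ℝⁿ, let c > 0, and set V = W + c z zᵀ, ρ = zᵀ W⁻¹ z, and φ = zᵀ W⁻² z. Then trace(W⁻¹) − trace(V⁻¹) = cφ / (1 + cρ). If moreover W − I_n is positive semidefinite, then 0 ≤ trace(W⁻¹) − trace(V⁻¹) < 1. -/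
/-!
By Sherman–Morrison, `V⁻¹ = W⁻¹ - c / (1 + cρ) • (W⁻¹ z)(zᵀ W⁻¹)`, and the trace of the rank-one
correction is `(zᵀ W⁻¹)(W⁻¹ z) = φ`. If `W ⪰ I`, then with `x = W⁻¹ z` we get
`φ = xᵀ x ≤ xᵀ W x = ρ`, so `cφ / (1 + cρ) ≤ cρ / (1 + cρ) < 1`.
-/

open Matrix

namespace Matrix

variable {ι K : Type*} [Fintype ι] [Field K]

theorem dotProduct_mul_self_mulVec {A : Matrix ι ι K} (hA : A.IsSymm) (v : ι → K) :
    v ⬝ᵥ (A * A) *ᵥ v = A *ᵥ v ⬝ᵥ A *ᵥ v := by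
  rw [← mulVec_mulVec, dotProduct_mulVec, ← vecMul_transpose, hA.eq]

variable [DecidableEq ι]

theorem inv_add_smul_vecMulVec {A : Matrix ι ι K} (hA : IsUnit A) (u v : ι → K) {c : K}
    (h : 1 + c * (v ⬝ᵥ A⁻¹ *ᵥ u) ≠ 0) :
    (A + c • vecMulVec u v)⁻¹
      = A⁻¹ - (c / (1 + c * (v ⬝ᵥ A⁻¹ *ᵥ u))) • vecMulVec (A⁻¹ *ᵥ u) (v ᵥ* A⁻¹) := by
  set ρ := v ⬝ᵥ A⁻¹ *ᵥ u
  set k := c / (1 + c * ρ)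
  set w := v ᵥ* A⁻¹
  have hA' : IsUnit A.det := (isUnit_iff_isUnit_det A).mp hA
  have hAu : A *ᵥ A⁻¹ *ᵥ u = u := by rw [mulVec_mulVec, mul_nonsing_inv A hA', one_mulVec]
  have hk : c - k * (1 + c * ρ) = 0 := by rw [div_mul_cancel₀ _ h, sub_self]
  apply inv_eq_right_inv
  calc (A + c • vecMulVec u v) * (A⁻¹ - k • vecMulVec (A⁻¹ *ᵥ u) w)
      = 1 - k • vecMulVec u w + (c • vecMulVec u w - (k * c * ρ) • vecMulVec u w) := by
        rw [add_mul, mul_sub, mul_sub, mul_nonsing_inv A hA', Matrix.mul_smul, Matrix.mul_smul,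
          mul_vecMulVec, hAu, smul_mul, vecMulVec_mul, smul_mul, vecMulVec_mul_vecMulVec,
          vecMulVec_smul, smul_smul, smul_smul]
    _ = 1 + (c - k * (1 + c * ρ)) • vecMulVec u w := by module
    _ = 1 := by rw [hk, zero_smul, add_zero]

theorem trace_inv_sub_trace_inv_add_smul_vecMulVec {A : Matrix ι ι K} (hA : IsUnit A)
    (u v : ι → K) {c : K} (h : 1 + c * (v ⬝ᵥ A⁻¹ *ᵥ u) ≠ 0) :
    trace A⁻¹ - trace (A + c • vecMulVec u v)⁻¹
      = c * (v ⬝ᵥ (A⁻¹ * A⁻¹) *ᵥ u) / (1 + c * (v ⬝ᵥ A⁻¹ *ᵥ u)) := by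
  rw [inv_add_smul_vecMulVec hA u v h, trace_sub, sub_sub_cancel, trace_smul, trace_vecMulVec,
    dotProduct_comm (A⁻¹ *ᵥ u), ← dotProduct_mulVec, mulVec_mulVec, smul_eq_mul,
    div_mul_eq_mul_div]

theorem PosDef.dotProduct_inv_mul_inv_mulVec_le {W : Matrix ι ι ℝ} (hW : W.PosDef)
    (hW1 : (W - 1).PosSemidef) (z : ι → ℝ) :
    z ⬝ᵥ (W⁻¹ * W⁻¹) *ᵥ z ≤ z ⬝ᵥ W⁻¹ *ᵥ z := by
  have hsymm : W⁻¹.IsSymm := by simpa [IsSymm] using hW.inv.isHermitian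
  set x := W⁻¹ *ᵥ z
  have hz : W *ᵥ x = z := by
    rw [mulVec_mulVec, mul_nonsing_inv W ((isUnit_iff_isUnit_det W).mp hW.isUnit), one_mulVec]
  have hx := hW1.dotProduct_mulVec_nonneg x
  rw [star_trivial, sub_mulVec, one_mulVec, dotProduct_sub, sub_nonneg] at hx
  calc z ⬝ᵥ (W⁻¹ * W⁻¹) *ᵥ z = x ⬝ᵥ x := dotProduct_mul_self_mulVec hsymm z
    _ ≤ x ⬝ᵥ W *ᵥ x := hx
    _ = z ⬝ᵥ W⁻¹ *ᵥ z := by rw [hz, dotProduct_comm]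

end Matrix

/-- Leave-one-out trace identity: for `W` real symmetric positive definite, `c > 0`,
`V = W + c z zᵀ`, `ρ = zᵀ W⁻¹ z` and `φ = zᵀ W⁻² z`,
`trace(W⁻¹) − trace(V⁻¹) = cφ / (1 + cρ)`; moreover, if `W − Iₙ` is positive
semidefinite, then `0 ≤ trace(W⁻¹) − trace(V⁻¹) < 1`. -/
theorem leave_one_out_trace_identity
    {n : ℕ} (W : Matrix (Fin n) (Fin n) ℝ) (hW : W.PosDef)
    (z : Fin n → ℝ) (c : ℝ) (hc : 0 < c) :
    (Matrix.trace W⁻¹ - Matrix.trace (W + c • vecMulVec z z)⁻¹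
        = c * (z ⬝ᵥ ((W⁻¹ * W⁻¹) *ᵥ z)) / (1 + c * (z ⬝ᵥ (W⁻¹ *ᵥ z)))) ∧
    ((W - 1).PosSemidef →
      0 ≤ Matrix.trace W⁻¹ - Matrix.trace (W + c • vecMulVec z z)⁻¹ ∧
      Matrix.trace W⁻¹ - Matrix.trace (W + c • vecMulVec z z)⁻¹ < 1) := by
  have hρ : 0 ≤ z ⬝ᵥ W⁻¹ *ᵥ z := by simpa using hW.inv.posSemidef.dotProduct_mulVec_nonneg z
  have hden : 0 < 1 + c * (z ⬝ᵥ W⁻¹ *ᵥ z) := by positivity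
  have hφ : 0 ≤ z ⬝ᵥ (W⁻¹ * W⁻¹) *ᵥ z := by
    have := (posSemidef_conjTranspose_mul_self W⁻¹).dotProduct_mulVec_nonneg z
    rwa [hW.inv.isHermitian.eq, star_trivial] at this
  have key := trace_inv_sub_trace_inv_add_smul_vecMulVec hW.isUnit z z hden.ne'
  refine ⟨key, fun hW1 => ?_⟩
  have hφρ := mul_le_mul_of_nonneg_left (hW.dotProduct_inv_mul_inv_mulVec_le hW1 z) hc.le
  rw [key, div_lt_one hden]
  exact ⟨by positivity, by linarith⟩
end

section
/- Let τ > 1 and γ > 0, and let f_τ be the Marčenko–Pastur density with ratio index τ (so that ∫_{b₋(τ)}^{b₊(τ)} f_τ(x) dx = 1/τ). Set I₁ = ∫_{b₋(τ)}^{b₊(τ)} f_τ(x)/(1 + γx) dx and I₂ = ∫_{b₋(τ)}^{b₊(τ)} f_τ(x)/(1 + γx)² dx. Then (I₁ + 1 − 1/τ)² < I₂ + 1 − 1/τ, and I₁ < 1/τ, and consequently d_{γ,τ} := −[(I₁ + 1 − 1/τ)² − (I₂ + 1 − 1/τ)] / [(I₁ + 1 − 1/τ)(1/τ − I₁)] >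 0. -/
/-!
Let `μ = f_τ dx + (1 - 1/τ) δ₀` be the Marčenko–Pastur law and `h x = 1 / (1 + γ x)`. Since
`∫ f_τ = 1/τ`, `μ` is a probability measure, and `I₁ + 1 - 1/τ`, `I₂ + 1 - 1/τ` are the first two
moments of `h` under `μ`. The first inequality is `Var_μ h > 0`: besides `∫ f_τ (h - t)² ≥ 0`
(taken at `t = ∫ h dμ`), the atom, where `h = 1`, contributes `(1 - 1/τ) (1/τ - I₁)²`. This is
positive since `I₁ < 1/τ`, which holds because `h < 1` on the support `[b₋, b₊] ⊆ (0, ∞)` of `f_τ`.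
The mass `∫ f_τ = 1/τ` comes from an explicit arcsine primitive of `√((b - x) (x - a)) / x`.
-/

open MeasureTheory

/-- Left edge `b₋(τ) = (1 − √τ)²` of the Marčenko–Pastur distribution. -/
noncomputable def mpLower (τ : ℝ) : ℝ := (1 - Real.sqrt τ) ^ 2

/-- Right edge `b₊(τ) = (1 + √τ)²` of the Marčenko–Pastur distribution. -/
noncomputable def mpUpper (τ : ℝ) : ℝ := (1 + Real.sqrt τ) ^ 2

/-- The Marčenko–Pastur density with ratio index `τ`:
`f_τ(x) = √((b₊(τ) − x)(x − b₋(τ))) / (2πτx)` on `[b₋(τ), b₊(τ)]`, and `0` elsewhere. -/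
noncomputable def mpDensity (τ : ℝ) (x : ℝ) : ℝ :=
  if x ∈ Set.Icc (mpLower τ) (mpUpper τ) then
    Real.sqrt ((mpUpper τ - x) * (x - mpLower τ)) / (2 * Real.pi * τ * x)
  else 0

open Real Set

section SqrtQuadratic

variable {a b x : ℝ}

theorem mul_sub_pos_of_mem_Ioo (hx : x ∈ Ioo a b) : 0 < (b - x) * (x - a) :=
  mul_pos (sub_pos.mpr hx.2) (sub_pos.mpr hx.1)

theorem hasDerivAt_arcsin_comp_of_one_sub_sq {u : ℝ → ℝ} {u' k : ℝ} (hu : HasDerivAt u u' x)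
    (hk : 0 < k) (hsq : 1 - u x ^ 2 = k ^ 2) :
    HasDerivAt (fun y => arcsin (u y)) (u' / k) x := by
  have hlt : u x ^ 2 < 1 := by nlinarith
  have hne₁ : u x ≠ -1 := by rintro h; rw [h] at hlt; norm_num at hlt
  have hne₂ : u x ≠ 1 := by rintro h; rw [h] at hlt; norm_num at hlt
  refine ((hasDerivAt_arcsin hne₁ hne₂).comp x hu).congr_deriv ?_
  rw [hsq, sqrt_sq hk.le, one_div_mul_eq_div]

theorem hasDerivAt_sqrt_mul_sub (hx : x ∈ Ioo a b) :
    HasDerivAt (fun y => √((b - y) * (y - a)))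
      ((a + b - 2 * x) / (2 * √((b - x) * (x - a)))) x := by
  have hf : HasDerivAt (fun y => (b - y) * (y - a)) (a + b - 2 * x) x := by
    refine (((hasDerivAt_id' x).const_sub b).mul ((hasDerivAt_id' x).sub_const a)).congr_deriv ?_
    ring
  exact hf.sqrt (mul_sub_pos_of_mem_Ioo hx).ne'

theorem hasDerivAt_arcsin_affine (hx : x ∈ Ioo a b) :
    HasDerivAt (fun y => arcsin ((2 * y - (a + b)) / (b - a)))
      (1 / √((b - x) * (x - a))) x := by
  have hba : 0 < b - a := by linarith [hx.1, hx.2]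
  have hR2 : √((b - x) * (x - a)) ^ 2 = (b - x) * (x - a) := sq_sqrt (mul_sub_pos_of_mem_Ioo hx).le
  have hR : 0 < √((b - x) * (x - a)) := sqrt_pos.mpr (mul_sub_pos_of_mem_Ioo hx)
  have hu : HasDerivAt (fun y => (2 * y - (a + b)) / (b - a)) (2 / (b - a)) x := by
    simpa using (((hasDerivAt_id' x).const_mul 2).sub_const (a + b)).div_const (b - a)
  refine (hasDerivAt_arcsin_comp_of_one_sub_sq hu
    (k := 2 * √((b - x) * (x - a)) / (b - a)) (by positivity) ?_).congr_deriv ?_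
  · field_simp
    rw [hR2]
    ring
  · field_simp

theorem hasDerivAt_arcsin_moebius (ha : 0 < a) (hx : x ∈ Ioo a b) :
    HasDerivAt (fun y => arcsin (((a + b) * y - 2 * (a * b)) / ((b - a) * y)))
      (√(a * b) / (x * √((b - x) * (x - a)))) x := by
  have hx₀ : 0 < x := ha.trans hx.1
  have hba : 0 < b - a := by linarith [hx.1, hx.2]
  have hR2 : √((b - x) * (x - a)) ^ 2 = (b - x) * (x - a) := sq_sqrt (mul_sub_pos_of_mem_Ioo hx).le
  have hR : 0 < √((b - x) * (x - a)) := sqrt_pos.mpr (mul_sub_pos_of_mem_Ioo hx)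
  have hab2 : √(a * b) ^ 2 = a * b := sq_sqrt (mul_pos ha (by linarith [hx.1, hx.2])).le
  have hab : 0 < √(a * b) := sqrt_pos.mpr (mul_pos ha (by linarith [hx.1, hx.2]))
  have hu : HasDerivAt (fun y => ((a + b) * y - 2 * (a * b)) / ((b - a) * y))
      (2 * (a * b) / ((b - a) * x ^ 2)) x := by
    refine ((((hasDerivAt_id' x).const_mul (a + b)).sub_const (2 * (a * b))).div
      ((hasDerivAt_id' x).const_mul (b - a)) (by positivity)).congr_deriv ?_
    field_simp
    ring
  refine (hasDerivAt_arcsin_comp_of_one_sub_sq hu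
    (k := 2 * √(a * b) * √((b - x) * (x - a)) / ((b - a) * x)) (by positivity) ?_).congr_deriv ?_
  · field_simp
    rw [hR2, hab2]
    ring
  · field_simp
    rw [hab2]

noncomputable def sqrtMulSubDivPrimitive (a b x : ℝ) : ℝ :=
  √((b - x) * (x - a)) + (a + b) / 2 * arcsin ((2 * x - (a + b)) / (b - a))
    - √(a * b) * arcsin (((a + b) * x - 2 * (a * b)) / ((b - a) * x))

theorem hasDerivAt_sqrtMulSubDivPrimitive (ha : 0 < a) (hx : x ∈ Ioo a b) :
    HasDerivAt (sqrtMulSubDivPrimitive a b) (√((b - x) * (x - a)) / x) x := by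
  have hx₀ : 0 < x := ha.trans hx.1
  have hR2 : √((b - x) * (x - a)) ^ 2 = (b - x) * (x - a) := sq_sqrt (mul_sub_pos_of_mem_Ioo hx).le
  have hR : 0 < √((b - x) * (x - a)) := sqrt_pos.mpr (mul_sub_pos_of_mem_Ioo hx)
  have hab2 : √(a * b) ^ 2 = a * b := sq_sqrt (mul_pos ha (by linarith [hx.1, hx.2])).le
  refine ((hasDerivAt_sqrt_mul_sub hx).add ((hasDerivAt_arcsin_affine hx).const_mul ((a + b) / 2))
    |>.sub ((hasDerivAt_arcsin_moebius ha hx).const_mul √(a * b))).congr_deriv ?_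
  field_simp
  rw [hab2]
  linear_combination -2 * hR2

theorem continuousOn_sqrtMulSubDivPrimitive (ha : 0 < a) (hab : a < b) :
    ContinuousOn (sqrtMulSubDivPrimitive a b) (Icc a b) := by
  have hden : ∀ y ∈ Icc a b, (b - a) * y ≠ 0 := fun y hy =>
    (mul_pos (sub_pos.mpr hab) (ha.trans_le hy.1)).ne'
  unfold sqrtMulSubDivPrimitive
  exact ((by fun_prop : Continuous fun y => √((b - y) * (y - a)) + (a + b) / 2 *
    arcsin ((2 * y - (a + b)) / (b - a))).continuousOn).sub
    (continuousOn_const.mul (continuous_arcsin.comp_continuousOn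
      ((by fun_prop : ContinuousOn _ _).div (by fun_prop) hden)))

theorem sqrtMulSubDivPrimitive_sub (ha : 0 < a) (hab : a < b) :
    sqrtMulSubDivPrimitive a b b - sqrtMulSubDivPrimitive a b a
      = π * ((a + b) / 2 - √(a * b)) := by
  have hba : b - a ≠ 0 := (sub_pos.mpr hab).ne'
  have hb : b ≠ 0 := (ha.trans hab).ne'
  have h₁ : (2 * b - (a + b)) / (b - a) = 1 := by field_simp; ring
  have h₂ : (2 * a - (a + b)) / (b - a) = -1 := by field_simp; ring
  have h₃ : ((a + b) * b - 2 * (a * b)) / ((b - a) * b) = 1 := by field_simp; ring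
  have h₄ : ((a + b) * a - 2 * (a * b)) / ((b - a) * a) = -1 := by field_simp; ring
  simp only [sqrtMulSubDivPrimitive, sub_self, zero_mul, mul_zero, sqrt_zero, h₁, h₂, h₃, h₄,
    arcsin_one, arcsin_neg_one]
  ring

theorem integral_sqrt_mul_sub_div_self (ha : 0 < a) (hab : a < b) :
    ∫ x in a..b, √((b - x) * (x - a)) / x = π * ((a + b) / 2 - √(a * b)) := by
  have hint : IntervalIntegrable (fun x => √((b - x) * (x - a)) / x) volume a b := by
    refine (ContinuousOn.div (by fun_prop) (by fun_prop) fun x hx => ?_).intervalIntegrable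
    rw [uIcc_of_le hab.le] at hx
    exact (ha.trans_le hx.1).ne'
  rw [intervalIntegral.integral_eq_sub_of_hasDerivAt_of_le hab.le
    (continuousOn_sqrtMulSubDivPrimitive ha hab)
    (fun x hx => hasDerivAt_sqrtMulSubDivPrimitive ha hx) hint,
    sqrtMulSubDivPrimitive_sub ha hab]

end SqrtQuadratic

theorem integral_mul_sq_sub_two_mul_add_sq_mul_nonneg {α : Type*} [MeasurableSpace α]
    {μ : Measure α} {g h : α → ℝ} (hg : 0 ≤ᵐ[μ] g) (hg_int : Integrable g μ)
    (hgh : Integrable (fun x => g x * h x) μ) (hgh2 : Integrable (fun x => g x * h x ^ 2) μ)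
    (t : ℝ) :
    0 ≤ ∫ x, g x * h x ^ 2 ∂μ - 2 * t * ∫ x, g x * h x ∂μ + t ^ 2 * ∫ x, g x ∂μ := by
  have hexpand : ∫ x, g x * (h x - t) ^ 2 ∂μ
      = ∫ x, g x * h x ^ 2 ∂μ - 2 * t * ∫ x, g x * h x ∂μ + t ^ 2 * ∫ x, g x ∂μ := by
    have hpt : ∀ x, g x * (h x - t) ^ 2 = g x * h x ^ 2 - 2 * t * (g x * h x) + t ^ 2 * g x :=
      fun x => by ring
    simp_rw [hpt]
    rw [integral_add ?_ (hg_int.const_mul _), integral_sub hgh2 (hgh.const_mul _),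
      integral_const_mul, integral_const_mul]
    exact hgh2.sub (hgh.const_mul _)
  rw [← hexpand]
  exact integral_nonneg_of_ae (hg.mono fun x hx => mul_nonneg hx (sq_nonneg _))

theorem sq_add_one_sub_lt_of_quadratic_nonneg {p q M : ℝ} (hM : M < 1) (hp : p < M)
    (hquad : 0 ≤ q - 2 * (p + 1 - M) * p + (p + 1 - M) ^ 2 * M) :
    (p + 1 - M) ^ 2 < q + 1 - M := by
  have hvar : q + 1 - M - (p + 1 - M) ^ 2
      = (q - 2 * (p + 1 - M) * p + (p + 1 - M) ^ 2 * M) + (1 - M) * (M - p) ^ 2 := by ring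
  nlinarith [mul_pos (sub_pos.mpr hM) (pow_pos (sub_pos.mpr hp) 2)]

section MarchenkoPastur

variable {τ γ : ℝ}

theorem mpLower_add_mpUpper (hτ : 0 ≤ τ) : mpLower τ + mpUpper τ = 2 + 2 * τ := by
  unfold mpLower mpUpper
  linear_combination 2 * sq_sqrt hτ

theorem mpLower_mul_mpUpper (hτ : 0 ≤ τ) : mpLower τ * mpUpper τ = (τ - 1) ^ 2 := by
  unfold mpLower mpUpper
  linear_combination (√τ ^ 2 + τ - 2) * sq_sqrt hτ

theorem mpLower_pos (hτ : τ ≠ 1) : 0 < mpLower τ := by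
  have : 1 - √τ ≠ 0 := sub_ne_zero.mpr fun h => hτ ((sqrt_eq_one (x := τ)).mp h.symm)
  unfold mpLower
  positivity

theorem mpLower_lt_mpUpper (hτ : 0 < τ) : mpLower τ < mpUpper τ := by
  unfold mpLower mpUpper
  nlinarith [sqrt_pos.mpr hτ]

theorem mpDensity_nonneg (hτ : 0 ≤ τ) (x : ℝ) : 0 ≤ mpDensity τ x := by
  unfold mpDensity
  split_ifs with hx
  · have : 0 ≤ x := (sq_nonneg _).trans hx.1
    positivity
  · exact le_rfl

theorem eqOn_mpDensity :
    EqOn (mpDensity τ) (fun x => √((mpUpper τ - x) * (x - mpLower τ)) / (2 * π * τ * x))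
      (Icc (mpLower τ) (mpUpper τ)) :=
  fun _ hx => if_pos hx

theorem continuousOn_mpDensity (hτ : 1 < τ) :
    ContinuousOn (mpDensity τ) (Icc (mpLower τ) (mpUpper τ)) := by
  have ha := mpLower_pos hτ.ne'
  refine ContinuousOn.congr (ContinuousOn.div (by fun_prop) (by fun_prop) fun x hx => ?_)
    eqOn_mpDensity
  have : 0 < x := ha.trans_le hx.1
  have : 0 < τ := by linarith
  positivity

theorem integrableOn_mpDensity_mul (hτ : 1 < τ) {φ : ℝ → ℝ}
    (hφ : ContinuousOn φ (Icc (mpLower τ) (mpUpper τ))) :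
    IntegrableOn (fun x => mpDensity τ x * φ x) (Icc (mpLower τ) (mpUpper τ)) :=
  ((continuousOn_mpDensity hτ).mul hφ).integrableOn_Icc

theorem integral_mpDensity (hτ : 1 < τ) :
    ∫ x in Icc (mpLower τ) (mpUpper τ), mpDensity τ x = 1 / τ := by
  have hτ₀ : 0 < τ := by linarith
  rw [setIntegral_congr_fun measurableSet_Icc eqOn_mpDensity, integral_Icc_eq_integral_Ioc,
    ← intervalIntegral.integral_of_le (mpLower_lt_mpUpper hτ₀).le]
  have hpt : ∀ x, √((mpUpper τ - x) * (x - mpLower τ)) / (2 * π * τ * x)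
      = √((mpUpper τ - x) * (x - mpLower τ)) / x / (2 * π * τ) := fun x => by
    rw [div_div, mul_comm x]
  simp_rw [hpt]
  rw [intervalIntegral.integral_div, integral_sqrt_mul_sub_div_self (mpLower_pos hτ.ne')
    (mpLower_lt_mpUpper hτ₀), mpLower_add_mpUpper hτ₀.le, mpLower_mul_mpUpper hτ₀.le,
    sqrt_sq (by linarith)]
  field_simp
  ring

theorem one_add_mul_pos_of_mem_Icc_mpLower (hγ : 0 ≤ γ) {x : ℝ}
    (hx : x ∈ Icc (mpLower τ) (mpUpper τ)) : 0 < 1 + γ * x := by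
  have : 0 ≤ x := (sq_nonneg _).trans hx.1
  positivity

theorem continuousOn_one_add_mul_inv (hγ : 0 ≤ γ) :
    ContinuousOn (fun x => (1 + γ * x)⁻¹) (Icc (mpLower τ) (mpUpper τ)) :=
  (continuous_const.add (continuous_const.mul continuous_id)).continuousOn.inv₀
    fun _ hx => (one_add_mul_pos_of_mem_Icc_mpLower hγ hx).ne'

theorem integral_mpDensity_div_nonneg (hτ : 0 ≤ τ) (hγ : 0 ≤ γ) :
    0 ≤ ∫ x in Icc (mpLower τ) (mpUpper τ), mpDensity τ x / (1 + γ * x) :=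
  setIntegral_nonneg measurableSet_Icc fun _ hx =>
    div_nonneg (mpDensity_nonneg hτ _) (one_add_mul_pos_of_mem_Icc_mpLower hγ hx).le

theorem integral_mpDensity_div_lt (hτ : 1 < τ) (hγ : 0 < γ) :
    ∫ x in Icc (mpLower τ) (mpUpper τ), mpDensity τ x / (1 + γ * x) < 1 / τ := by
  have ha := mpLower_pos hτ.ne'
  have hc : 1 < 1 + γ * mpLower τ := by nlinarith
  have hint :
      IntegrableOn (fun x => mpDensity τ x / (1 + γ * x)) (Icc (mpLower τ) (mpUpper τ)) := by
    simpa only [← div_eq_mul_inv] using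
      integrableOn_mpDensity_mul hτ (continuousOn_one_add_mul_inv hγ.le)
  calc ∫ x in Icc (mpLower τ) (mpUpper τ), mpDensity τ x / (1 + γ * x)
      ≤ ∫ x in Icc (mpLower τ) (mpUpper τ), mpDensity τ x / (1 + γ * mpLower τ) :=
        setIntegral_mono_on hint ((continuousOn_mpDensity hτ).integrableOn_Icc.div_const _)
          measurableSet_Icc fun x hx => div_le_div_of_nonneg_left
            (mpDensity_nonneg (by linarith) x) (by linarith) (by nlinarith [hx.1])
    _ = 1 / τ / (1 + γ * mpLower τ) := by rw [integral_div, integral_mpDensity hτ]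
    _ < 1 / τ := div_lt_self (one_div_pos.mpr (by linarith)) hc

theorem integral_mpDensity_div_quadratic_nonneg (hτ : 1 < τ) (hγ : 0 ≤ γ) (t : ℝ) :
    0 ≤ (∫ x in Icc (mpLower τ) (mpUpper τ), mpDensity τ x / (1 + γ * x) ^ 2)
      - 2 * t * (∫ x in Icc (mpLower τ) (mpUpper τ), mpDensity τ x / (1 + γ * x))
      + t ^ 2 * (1 / τ) := by
  have hcont := continuousOn_one_add_mul_inv (τ := τ) hγ
  have := integral_mul_sq_sub_two_mul_add_sq_mul_nonneg (h := fun x => (1 + γ * x)⁻¹)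
    (ae_of_all _ (mpDensity_nonneg (by linarith))) (continuousOn_mpDensity hτ).integrableOn_Icc
    (integrableOn_mpDensity_mul hτ hcont) (integrableOn_mpDensity_mul hτ (hcont.pow 2)) t
  simpa only [← div_eq_mul_inv, inv_pow, integral_mpDensity hτ] using this

end MarchenkoPastur

/-- Positivity of the limiting constant `d_{γ,τ}` in the case `τ > 1`: with
`I₁ = ∫ f_τ(x)/(1 + γx) dx` and `I₂ = ∫ f_τ(x)/(1 + γx)² dx` (so that
`∫ f_τ = 1/τ`), one has `(I₁ + 1 − 1/τ)² < I₂ + 1 − 1/τ`, `I₁ < 1/τ` and hence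
`d_{γ,τ} = −[(I₁ + 1 − 1/τ)² − (I₂ + 1 − 1/τ)] / [(I₁ + 1 − 1/τ)(1/τ − I₁)] > 0`. -/
theorem mp_limit_constant_pos_high_dim
    (τ γ : ℝ) (hτ : 1 < τ) (hγ : 0 < γ) :
    ((∫ x in Set.Icc (mpLower τ) (mpUpper τ), mpDensity τ x / (1 + γ * x)) + 1 - 1 / τ) ^ 2 <
        (∫ x in Set.Icc (mpLower τ) (mpUpper τ), mpDensity τ x / (1 + γ * x) ^ 2) + 1 - 1 / τ ∧
    (∫ x in Set.Icc (mpLower τ) (mpUpper τ), mpDensity τ x / (1 + γ * x)) < 1 / τ ∧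
    0 < -((((∫ x in Set.Icc (mpLower τ) (mpUpper τ), mpDensity τ x / (1 + γ * x)) + 1 - 1 / τ) ^ 2 -
            ((∫ x in Set.Icc (mpLower τ) (mpUpper τ), mpDensity τ x / (1 + γ * x) ^ 2) + 1 - 1 / τ)) /
          ((((∫ x in Set.Icc (mpLower τ) (mpUpper τ), mpDensity τ x / (1 + γ * x)) + 1 - 1 / τ)) *
            (1 / τ - (∫ x in Set.Icc (mpLower τ) (mpUpper τ), mpDensity τ x / (1 + γ * x))))) := by
  have hτ_inv : 1 / τ < 1 := (div_lt_one (by linarith)).mpr hτ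
  have hI₁_lt := integral_mpDensity_div_lt hτ hγ
  have hI₁_nonneg := integral_mpDensity_div_nonneg (τ := τ) (by linarith) hγ.le
  have hsq := sq_add_one_sub_lt_of_quadratic_nonneg hτ_inv hI₁_lt
    (integral_mpDensity_div_quadratic_nonneg hτ hγ.le _)
  refine ⟨hsq, hI₁_lt, neg_pos.mpr (div_neg_of_neg_of_pos (sub_neg.mpr hsq)
    (mul_pos ?_ (sub_pos.mpr hI₁_lt)))⟩
  linarith
end

section
/- Let γ₀ ∈ ℝ and η > 0, and set J = (γ₀ − η, γ₀ + η). For each n, let s_n be a random function from J to ℝ that is almost surely nonincreasing on J, and let s̄ : J → ℝ be a deterministic function that is continuous at γ₀. Suppose that for each fixed γ ∈ J, s_n(γ) → s̄(γ) in probability as n → ∞, and that γ̂_n are random variables taking values such that γ̂_n → γ₀ in probability. Then s_n(γ̂_n) → s̄(γ₀) in probability as n → ∞. -/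
open MeasureTheory Filter Topology

/-
On the event where `γ̂ₙ` lies in `[γ₀ - ε, γ₀ + ε]` and `sₙ` is nonincreasing, `sₙ(γ̂ₙ)` is
squeezed between `sₙ(γ₀ + ε)` and `sₙ(γ₀ - ε)`. Each of these is close to `s̄(γ₀ ± ε)` with
probability tending to one, and `s̄(γ₀ ± ε)` is close to `s̄(γ₀)` once `ε` is small, by continuity.
-/

theorem abs_sub_le_of_antitoneOn {α : Type*} [Preorder α] {f : α → ℝ} {s : Set α}
    (hf : AntitoneOn f s) {a b x : α} (ha : a ∈ s) (hb : b ∈ s) (hx : x ∈ s)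
    (hax : a ≤ x) (hxb : x ≤ b) {c d : ℝ} (hfa : |f a - c| ≤ d) (hfb : |f b - c| ≤ d) :
    |f x - c| ≤ d := by
  have hle : f x ≤ f a := hf ha hx hax
  have hge : f b ≤ f x := hf hx hb hxb
  rw [abs_le] at hfa hfb ⊢
  constructor <;> linarith [hfa.1, hfb.2]

theorem ContinuousAt.exists_pos_abs_sub_le {f : ℝ → ℝ} {x : ℝ} (hf : ContinuousAt f x)
    {η e : ℝ} (hη : 0 < η) (he : 0 < e) :
    ∃ ε, 0 < ε ∧ ε < η ∧ |f (x - ε) - f x| ≤ e ∧ |f (x + ε) - f x| ≤ e := by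
  obtain ⟨r, hr, hball⟩ := Metric.continuousAt_iff.mp hf e he
  have hclose : ∀ y, |y - x| < r → |f y - f x| ≤ e := fun y hy => (hball hy).le
  refine ⟨min (r / 2) (η / 2), by positivity, by linarith [min_le_right (r / 2) (η / 2)], ?_, ?_⟩
  all_goals
    refine hclose _ ?_
    rw [abs_lt]
    constructor <;> linarith [min_le_left (r / 2) (η / 2), lt_min (half_pos hr) (half_pos hη)]

section

variable {Ω : Type*} [MeasurableSpace Ω] {μ : Measure Ω}

theorem ae_subset_union_of_antitoneOn {f : Ω → ℝ → ℝ} {g : ℝ → ℝ} {X : Ω → ℝ} {s : Set ℝ}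
    {γ0 ε δ d : ℝ} (hf : ∀ᵐ ω ∂μ, AntitoneOn (f ω) s) (hs : Set.Icc (γ0 - ε) (γ0 + ε) ⊆ s)
    (hlo : |g (γ0 - ε) - g γ0| + d ≤ δ) (hhi : |g (γ0 + ε) - g γ0| + d ≤ δ) :
    {ω | δ < |f ω (X ω) - g γ0|} ≤ᵐ[μ] ({ω | ε < |X ω - γ0|} ∪
      ({ω | d < |f ω (γ0 - ε) - g (γ0 - ε)|} ∪ {ω | d < |f ω (γ0 + ε) - g (γ0 + ε)|}) : Set Ω) := by
  filter_upwards [hf] with ω hω hfar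
  by_contra hnear
  change δ < _ at hfar
  change ¬(ε < _ ∨ d < _ ∨ d < _) at hnear
  simp only [not_or, not_lt] at hnear
  obtain ⟨hX, hflo, hfhi⟩ := hnear
  have hXmem : X ω ∈ Set.Icc (γ0 - ε) (γ0 + ε) := by
    rw [abs_le] at hX
    constructor <;> linarith
  have hε : 0 ≤ ε := (abs_nonneg _).trans hX
  refine hfar.not_ge (abs_sub_le_of_antitoneOn hω (hs ⟨le_rfl, by linarith⟩)
    (hs ⟨by linarith, le_rfl⟩) (hs hXmem) hXmem.1 hXmem.2 ?_ ?_)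
  · linarith [abs_sub_le (f ω (γ0 - ε)) (g (γ0 - ε)) (g γ0)]
  · linarith [abs_sub_le (f ω (γ0 + ε)) (g (γ0 + ε)) (g γ0)]

theorem tendsto_measure_zero_of_ae_subset_union {ι : Type*} {l : Filter ι} {A B C : ι → Set Ω}
    (hsub : ∀ i, A i ≤ᵐ[μ] (B i ∪ C i : Set Ω)) (hB : Tendsto (fun i => μ (B i)) l (𝓝 0))
    (hC : Tendsto (fun i => μ (C i)) l (𝓝 0)) :
    Tendsto (fun i => μ (A i)) l (𝓝 0) := by
  have hBC : Tendsto (fun i => μ (B i) + μ (C i)) l (𝓝 0) := by simpa using hB.add hC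
  exact tendsto_of_tendsto_of_tendsto_of_le_of_le tendsto_const_nhds hBC (fun _ => zero_le)
    fun i => (measure_mono_ae (hsub i)).trans (measure_union_le _ _)

end

theorem plug_in_convergence_of_monotone_random_functions_general
    {Ω : Type*} [MeasurableSpace Ω] (μ : Measure Ω)
    (γ0 η : ℝ) (hη : 0 < η)
    (s : ℕ → Ω → ℝ → ℝ) (sbar : ℝ → ℝ)
    (hanti : ∀ n, ∀ᵐ ω ∂μ, AntitoneOn (s n ω) (Set.Ioo (γ0 - η) (γ0 + η)))
    (hcont : ContinuousAt sbar γ0)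
    (hconv : ∀ γ ∈ Set.Ioo (γ0 - η) (γ0 + η), ∀ δ : ℝ, 0 < δ →
      Tendsto (fun n => μ {ω | δ < |s n ω γ - sbar γ|}) atTop (nhds 0))
    (γhat : ℕ → Ω → ℝ)
    (hγhat : ∀ δ : ℝ, 0 < δ →
      Tendsto (fun n => μ {ω | δ < |γhat n ω - γ0|}) atTop (nhds 0)) :
    ∀ δ : ℝ, 0 < δ →
      Tendsto (fun n => μ {ω | δ < |s n ω (γhat n ω) - sbar γ0|}) atTop (nhds 0) := by
  intro δ hδ
  obtain ⟨ε, hε, hεη, hlo, hhi⟩ := hcont.exists_pos_abs_sub_le hη (half_pos hδ)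
  have hIcc : Set.Icc (γ0 - ε) (γ0 + ε) ⊆ Set.Ioo (γ0 - η) (γ0 + η) :=
    Set.Icc_subset_Ioo (by linarith) (by linarith)
  have hendpoints : γ0 - ε ∈ Set.Ioo (γ0 - η) (γ0 + η) ∧ γ0 + ε ∈ Set.Ioo (γ0 - η) (γ0 + η) :=
    ⟨hIcc ⟨le_rfl, by linarith⟩, hIcc ⟨by linarith, le_rfl⟩⟩
  exact tendsto_measure_zero_of_ae_subset_union
    (fun n => ae_subset_union_of_antitoneOn (hanti n) hIcc (by linarith) (by linarith))
    (hγhat ε hε)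
    (tendsto_measure_zero_of_ae_subset_union (fun _ => EventuallyLE.rfl)
      (hconv _ hendpoints.1 _ (half_pos hδ)) (hconv _ hendpoints.2 _ (half_pos hδ)))

/-- If random functions `sₙ` are almost surely nonincreasing on an interval
`J = (γ₀ − η, γ₀ + η)`, converge pointwise in probability on `J` to a deterministic
function `s̄` that is continuous at `γ₀`, and `γ̂ₙ → γ₀` in probability, then
`sₙ(γ̂ₙ) → s̄(γ₀)` in probability. -/
theorem plug_in_convergence_of_monotone_random_functions
    {Ω : Type*} [MeasurableSpace Ω] (μ : Measure Ω) [IsProbabilityMeasure μ]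
    (γ0 η : ℝ) (hη : 0 < η)
    (s : ℕ → Ω → ℝ → ℝ) (sbar : ℝ → ℝ)
    (hmeas : ∀ n, ∀ γ ∈ Set.Ioo (γ0 - η) (γ0 + η), Measurable (fun ω => s n ω γ))
    (hanti : ∀ n, ∀ᵐ ω ∂μ, AntitoneOn (s n ω) (Set.Ioo (γ0 - η) (γ0 + η)))
    (hcont : ContinuousAt sbar γ0)
    (hconv : ∀ γ ∈ Set.Ioo (γ0 - η) (γ0 + η), ∀ δ : ℝ, 0 < δ →
      Tendsto (fun n => μ {ω | δ < |s n ω γ - sbar γ|}) atTop (nhds 0))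
    (γhat : ℕ → Ω → ℝ)
    (hγhat : ∀ δ : ℝ, 0 < δ →
      Tendsto (fun n => μ {ω | δ < |γhat n ω - γ0|}) atTop (nhds 0)) :
    ∀ δ : ℝ, 0 < δ →
      Tendsto (fun n => μ {ω | δ < |s n ω (γhat n ω) - sbar γ0|}) atTop (nhds 0) :=
  plug_in_convergence_of_monotone_random_functions_general μ γ0 η hη s sbar hanti hcont hconv γhat
    hγhat
end
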